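/- Let T > 0, let b : ℝ → ℝ be continuously differentiable on [0, T] with b(0) = 0 and b'(t) > 0 for every t ∈ [0, T], and let g : [0, T] → ℝ be Lebesgue integrable; set a(t) = ∫_0^t g(s) ds for t ∈ [0, T]. Then the following are equivalent: (i) ∫_0^T g(t)^2 dt < ∞ and ∫_0^T g(t)^2 |g(t)| dt < ∞; (ii) there exists a measurable function z : [0, T] → ℝ such that a(t) = ∫_0^t z(s) b'(s) ds for all t ∈ [0, T], ∫_0^T z(t)^2 b'(t) dt < ∞, and ∫_0^T z(t)^2 |g(t)| dt < ∞. -/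

import Mathlib

/-!
Since `b'` is continuous and positive on `[0, T]`, it is pinched between two positive
constants there, so multiplying by `b'` or by `b'²` does not affect integrability. Both
conditions then say the same thing about `g = z b'`: `g² = (z² b') b'` and
`g² |g| = (z² |g|) b'²`. For (i) ⇒ (ii) take `z = g / b'`; for (ii) ⇒ (i), `z b'` is
integrable (as `|z| b' ≤ z² b' + b'`) and has the same primitive as `g`, so it equals `g` a.e.
by the Lebesgue differentiation theorem.
-/

open MeasureTheory Set Filter Topology

section Weights

variable {α : Type*} [MeasurableSpace α] {μ : Measure α}

theorem integrable_mul_iff_of_ae_bounds {f w : α → ℝ} {m M : ℝ}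
    (hw : AEStronglyMeasurable w μ) (hm : 0 < m) (hbd : ∀ᵐ x ∂μ, m ≤ w x ∧ w x ≤ M) :
    Integrable (fun x => f x * w x) μ ↔ Integrable f μ := by
  refine ⟨fun hfw => ?_, fun hf => hf.mul_bdd hw (c := M) ?_⟩
  · have hinv : Integrable (fun x => f x * w x * (w x)⁻¹) μ := by
      refine hfw.mul_bdd hw.aemeasurable.inv.aestronglyMeasurable (c := m⁻¹) ?_
      filter_upwards [hbd] with x hx
      rw [norm_inv, Real.norm_of_nonneg (hm.le.trans hx.1)]
      exact inv_anti₀ hm hx.1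
    refine hinv.congr ?_
    filter_upwards [hbd] with x hx
    rw [mul_inv_cancel_right₀ (hm.trans_le hx.1).ne']
  · filter_upwards [hbd] with x hx
    rw [Real.norm_of_nonneg (hm.le.trans hx.1)]
    exact hx.2

variable {g z w : α → ℝ} {m M : ℝ}

theorem integrable_sq_iff_of_ae_eq_mul (hw : AEStronglyMeasurable w μ) (hm : 0 < m)
    (hbd : ∀ᵐ x ∂μ, m ≤ w x ∧ w x ≤ M) (hgzw : g =ᵐ[μ] fun x => z x * w x) :
    Integrable (fun x => g x ^ 2) μ ↔ Integrable (fun x => z x ^ 2 * w x) μ := by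
  rw [← integrable_mul_iff_of_ae_bounds (f := fun x => z x ^ 2 * w x) hw hm hbd]
  refine integrable_congr ?_
  filter_upwards [hgzw] with x hx
  rw [hx]
  ring

theorem integrable_sq_mul_abs_iff_of_ae_eq_mul (hw : AEStronglyMeasurable w μ) (hm : 0 < m)
    (hbd : ∀ᵐ x ∂μ, m ≤ w x ∧ w x ≤ M) (hgzw : g =ᵐ[μ] fun x => z x * w x) :
    Integrable (fun x => g x ^ 2 * |g x|) μ ↔ Integrable (fun x => z x ^ 2 * |g x|) μ := by
  have hbd2 : ∀ᵐ x ∂μ, m ^ 2 ≤ w x ^ 2 ∧ w x ^ 2 ≤ M ^ 2 := by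
    filter_upwards [hbd] with x hx
    exact ⟨pow_le_pow_left₀ hm.le hx.1 2, pow_le_pow_left₀ (hm.le.trans hx.1) hx.2 2⟩
  rw [← integrable_mul_iff_of_ae_bounds (f := fun x => z x ^ 2 * |g x|) (w := fun x => w x ^ 2)
    (hw.pow 2) (pow_pos hm 2) hbd2]
  refine integrable_congr ?_
  filter_upwards [hgzw] with x hx
  rw [hx]
  ring

theorem MeasureTheory.Integrable.mul_of_sq_mul (hz : AEStronglyMeasurable z μ)
    (hw : AEStronglyMeasurable w μ)
    (hw0 : ∀ᵐ x ∂μ, 0 ≤ w x) (hzw : Integrable (fun x => z x ^ 2 * w x) μ)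
    (hwi : Integrable w μ) : Integrable (fun x => z x * w x) μ := by
  refine (hzw.add hwi).mono' (hz.mul hw) ?_
  filter_upwards [hw0] with x hx
  have habs : |z x| ≤ z x ^ 2 + 1 := by nlinarith [sq_abs (z x), sq_nonneg (|z x| - 1)]
  rw [norm_mul, Real.norm_of_nonneg hx, Real.norm_eq_abs]
  simpa only [Pi.add_apply, add_mul, one_mul] using mul_le_mul_of_nonneg_right habs hx

end Weights

theorem ae_restrict_Ioc_eq_of_forall_setIntegral_Ioc_eq {E : Type*} [NormedAddCommGroup E]
    [NormedSpace ℝ E] [CompleteSpace E] {f h : ℝ → E} {a b : ℝ}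
    (hf : IntegrableOn f (Ioc a b)) (hh : IntegrableOn h (Ioc a b))
    (heq : ∀ t ∈ Ioo a b, ∫ s in Ioc a t, f s = ∫ s in Ioc a t, h s) :
    f =ᵐ[volume.restrict (Ioc a b)] h := by
  rcases lt_or_ge b a with hba | hab
  · simp only [Ioc_eq_empty_of_le hba.le, Measure.restrict_empty, ae_zero, EventuallyEq,
      eventually_bot]
  have hf' := (intervalIntegrable_iff_integrableOn_Ioc_of_le hab).mpr hf
  have hh' := (intervalIntegrable_iff_integrableOn_Ioc_of_le hab).mpr hh
  have hb : ∀ᵐ x : ℝ, x ≠ b := by simp [ae_iff, measure_singleton]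
  rw [EventuallyEq, ae_restrict_iff' measurableSet_Ioc]
  filter_upwards [hf'.ae_hasDerivAt_integral, hh'.ae_hasDerivAt_integral, hb]
    with x hfx hhx hxb hx
  have hx' : x ∈ Ioo a b := ⟨hx.1, lt_of_le_of_ne hx.2 hxb⟩
  have hxI : x ∈ uIcc a b := Icc_subset_uIcc (Ioo_subset_Icc_self hx')
  have hprim : (fun y => ∫ t in a..y, f t) =ᶠ[𝓝 x] fun y => ∫ t in a..y, h t := by
    filter_upwards [Ioo_mem_nhds hx'.1 hx'.2] with y hy
    rw [intervalIntegral.integral_of_le hy.1.le, intervalIntegral.integral_of_le hy.1.le, heq y hy]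
  exact (hfx hxI a left_mem_uIcc).unique ((hhx hxI a left_mem_uIcc).congr_of_eventuallyEq hprim)

theorem stmt1 (T : ℝ) (b' : ℝ → ℝ)
    (hb'cont : ContinuousOn b' (Set.Icc 0 T))
    (hb'pos : ∀ t ∈ Set.Icc 0 T, 0 < b' t)
    (g : ℝ → ℝ) (hg : IntegrableOn g (Set.Icc 0 T) volume)
    (a : ℝ → ℝ)
    (ha : ∀ t ∈ Set.Icc 0 T, a t = ∫ s in Set.Ioc 0 t, g s) :
    (IntegrableOn (fun t => g t ^ 2) (Set.Ioc 0 T) volume ∧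
      IntegrableOn (fun t => g t ^ 2 * |g t|) (Set.Ioc 0 T) volume)
    ↔
    (∃ z : ℝ → ℝ, Measurable z ∧
      (∀ t ∈ Set.Icc 0 T, a t = ∫ s in Set.Ioc 0 t, z s * b' s) ∧
      IntegrableOn (fun t => z t ^ 2 * b' t) (Set.Ioc 0 T) volume ∧
      IntegrableOn (fun t => z t ^ 2 * |g t|) (Set.Ioc 0 T) volume) := by
  set μ := volume.restrict (Ioc (0 : ℝ) T)
  obtain ⟨m, hm, hm_le⟩ := isCompact_Icc.exists_forall_le' hb'cont hb'pos
  obtain ⟨M, hM⟩ := isCompact_Icc.exists_bound_of_continuousOn hb'cont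
  have hbd : ∀ᵐ t ∂μ, m ≤ b' t ∧ b' t ≤ M := by
    filter_upwards [ae_restrict_mem measurableSet_Ioc] with t ht
    have ht' := Ioc_subset_Icc_self ht
    exact ⟨hm_le t ht', (le_abs_self _).trans (hM t ht')⟩
  have hb'meas : AEStronglyMeasurable b' μ :=
    (hb'cont.aestronglyMeasurable measurableSet_Icc).mono_set Ioc_subset_Icc_self
  have hgIoc : IntegrableOn g (Ioc 0 T) := hg.mono_set Ioc_subset_Icc_self
  have hconds : ∀ z : ℝ → ℝ, g =ᵐ[μ] (fun t => z t * b' t) →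
      ((Integrable (fun t => g t ^ 2) μ ∧ Integrable (fun t => g t ^ 2 * |g t|) μ) ↔
        (Integrable (fun t => z t ^ 2 * b' t) μ ∧ Integrable (fun t => z t ^ 2 * |g t|) μ)) :=
    fun z hgz => and_congr (integrable_sq_iff_of_ae_eq_mul hb'meas hm hbd hgz)
      (integrable_sq_mul_abs_iff_of_ae_eq_mul hb'meas hm hbd hgz)
  constructor
  · intro hgconds
    have hq : AEMeasurable (fun t => g t / b' t) μ :=
      hgIoc.aemeasurable.div hb'meas.aemeasurable
    have hgz : g =ᵐ[μ] fun t => hq.mk _ t * b' t := by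
      filter_upwards [hq.ae_eq_mk, hbd] with t hqt hbt
      rw [← hqt, div_mul_cancel₀ _ (hm.trans_le hbt.1).ne']
    refine ⟨hq.mk _, hq.measurable_mk, fun t ht => ?_, (hconds _ hgz).mp hgconds⟩
    rw [ha t ht]
    exact integral_congr_ae (ae_restrict_of_ae_restrict_of_subset (Ioc_subset_Ioc_right ht.2) hgz)
  · rintro ⟨z, hzm, hza, hzconds⟩
    have hzb : Integrable (fun t => z t * b' t) μ :=
      hzconds.1.mul_of_sq_mul hzm.aestronglyMeasurable hb'meas
        (hbd.mono fun t ht => hm.le.trans ht.1)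
        (hb'cont.integrableOn_Icc.mono_set Ioc_subset_Icc_self)
    have hgz := ae_restrict_Ioc_eq_of_forall_setIntegral_Ioc_eq hgIoc hzb fun t ht => by
      rw [← ha t (Ioo_subset_Icc_self ht), ← hza t (Ioo_subset_Icc_self ht)]
    exact (hconds z hgz).mpr hzconds
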